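/- Every nonempty planar forest F can be written uniquely as F = (•F_1) ↗ (•F_2) ↗ … ↗ (•F_n) for some n ≥ 1 and planar forests F_1, …, F_n, where •G denotes the forest consisting of the single-vertex tree • followed by G. Consequently the monoid of planar forests under ↗ is freely generated by the forests of the form •G. -/

import Mathlib

/-- Planar rooted trees; `PTree.node []` is the single-vertex tree `•`. -/
inductive PTree : Type
  | node : List PTree → PTree

/-- Planar rooted forests; concatenation is list append, the empty forest is the unit. -/
abbrev Forest : Type := List PTree

/-- Grafting on the left leaf: `F ↗ G` grafts `F` on the leftmost leaf of `G`,
with `F ↗ 1 = F`. -/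
def graftLeaf (F : Forest) : Forest → Forest
  | [] => F
  | .node c :: rest => .node (graftLeaf F c) :: rest

/-- `(•F_1) ↗ (•F_2) ↗ … ↗ (•F_n)`, where `•G` is the forest `PTree.node [] :: G`. -/
def graftLeafProd (L : List Forest) : Forest :=
  (L.map fun G => PTree.node [] :: G).foldr graftLeaf []

/-!
The last factor can be read off the product: `(•F_1) ↗ … ↗ (•F_n)` is the forest whose first tree
has children `(•F_1) ↗ … ↗ (•F_{n-1})` and whose remaining trees form `F_n`. So the forest
`.node c :: R` factors exactly as the factorization of `c` followed by `R`, and recursion on the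
first tree gives both existence and uniqueness.
-/

def graftLeafFactors : Forest → List Forest
  | [] => []
  | .node c :: rest => graftLeafFactors c ++ [rest]

theorem foldr_graftLeaf_node (Gs : List Forest) (c rest : Forest) :
    Gs.foldr graftLeaf (.node c :: rest) = .node (Gs.foldr graftLeaf c) :: rest := by
  induction Gs with
  | nil => rfl
  | cons G Gs ih => rw [List.foldr_cons, ih, graftLeaf, List.foldr_cons]

theorem graftLeafProd_append_singleton (L : List Forest) (G : Forest) :
    graftLeafProd (L ++ [G]) = .node (graftLeafProd L) :: G := by
  rw [graftLeafProd, List.map_append, List.foldr_append, List.map_singleton, List.foldr_cons,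
    List.foldr_nil, graftLeaf]
  exact foldr_graftLeaf_node _ [] G

theorem graftLeafFactors_graftLeafProd (L : List Forest) :
    graftLeafFactors (graftLeafProd L) = L := by
  induction L using List.reverseRecOn with
  | nil => rw [graftLeafProd, List.map_nil, List.foldr_nil, graftLeafFactors]
  | append_singleton L G ih => rw [graftLeafProd_append_singleton, graftLeafFactors, ih]

theorem graftLeafProd_graftLeafFactors : ∀ F : Forest, graftLeafProd (graftLeafFactors F) = F
  | [] => by rw [graftLeafFactors, graftLeafProd, List.map_nil, List.foldr_nil]
  | .node c :: rest => by
      rw [graftLeafFactors, graftLeafProd_append_singleton, graftLeafProd_graftLeafFactors c]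

theorem graftLeafFactors_ne_nil : ∀ {F : Forest}, F ≠ [] → graftLeafFactors F ≠ []
  | .node c :: rest, _ => by simp [graftLeafFactors]

/-- Every nonempty planar forest `F` can be written uniquely as
`F = (•F_1) ↗ (•F_2) ↗ … ↗ (•F_n)` with `n ≥ 1`: the monoid of planar forests under
`↗` is freely generated by the forests of the form `•G`. -/
theorem graftLeaf_unique_factorization (F : Forest) (hF : F ≠ []) :
    ∃! L : List Forest, L ≠ [] ∧ F = graftLeafProd L := by
  refine ⟨graftLeafFactors F,
    ⟨graftLeafFactors_ne_nil hF, (graftLeafProd_graftLeafFactors F).symm⟩, ?_⟩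
  rintro L ⟨-, rfl⟩
  exact (graftLeafFactors_graftLeafProd L).symm
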